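/- arXiv:1805.04966 — 2 statements merged into one kernel-verified Lean document; each statement's English description precedes it below -/
import Mathlib

section
/- If G and H are connected graphs of orders n ≥ 2 and n' ≥ 3 respectively, then 𝔡(G □ H) ≥ 3, where G □ H is the Cartesian product of G and H. -/
open SimpleGraph Finset

/-- Distance from a vertex to a finite set of vertices:
`min_{w ∈ S} d(u, w)`. -/
noncomputable def setDist {V : Type*} (G : SimpleGraph V) (u : V) (S : Finset V) : ℕ :=
  sInf (G.dist u '' (S : Set V))

/-- The set `𝒟_G(x,y)` of vertices distinguishing `x` and `y`. -/
noncomputable def DG {V : Type*} (G : SimpleGraph V) [Fintype V] (x y : V) : Finset V :=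
  Finset.univ.filter fun z => G.dist z x ≠ G.dist z y

/-- `𝔡(G) = min_{x ≠ y} |𝒟_G(x,y)|`. -/
noncomputable def frakd {V : Type*} (G : SimpleGraph V) [Fintype V] : ℕ :=
  sInf {m | ∃ x y : V, x ≠ y ∧ (DG G x y).card = m}

/-- `𝔡*(G) = max_{x ≠ y} |𝒟_G(x,y)|`. -/
noncomputable def frakdStar {V : Type*} (G : SimpleGraph V) [Fintype V] : ℕ :=
  sSup {m | ∃ x y : V, x ≠ y ∧ (DG G x y).card = m}

/-- A partition of the vertex set is a `k`-partition generator if every pair of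
distinct vertices is distinguished by at least `k` parts. -/
noncomputable def IsKPartitionGenerator {V : Type*} (G : SimpleGraph V) [Fintype V]
    [DecidableEq V] (k : ℕ) (P : Finpartition (Finset.univ : Finset V)) : Prop :=
  ∀ u v : V, u ≠ v → k ≤ (P.parts.filter fun S => setDist G u S ≠ setDist G v S).card

/-- The `k`-partition dimension `pd_k(G)`. -/
noncomputable def pd {V : Type*} (G : SimpleGraph V) [Fintype V] [DecidableEq V] (k : ℕ) : ℕ :=
  sInf {m | ∃ P : Finpartition (Finset.univ : Finset V),
    IsKPartitionGenerator G k P ∧ P.parts.card = m}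

/-- A set of vertices is a `k`-metric generator if every pair of distinct
vertices is distinguished by at least `k` of its vertices. -/
def IsKMetricGenerator {V : Type*} (G : SimpleGraph V) [Fintype V] (k : ℕ) (W : Finset V) : Prop :=
  ∀ u v : V, u ≠ v → k ≤ (W.filter fun z => G.dist z u ≠ G.dist z v).card

/-- The `k`-metric dimension `dim_k(G)`. -/
noncomputable def metricDim {V : Type*} (G : SimpleGraph V) [Fintype V] (k : ℕ) : ℕ :=
  sInf {m | ∃ W : Finset V, IsKMetricGenerator G k W ∧ W.card = m}

/-!
Distances in `G □ H` add coordinatewise, and in a connected graph `x` and `y` always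
distinguish the pair `x, y`, so it suffices to find one more distinguishing vertex. If `x` and
`y` share their first coordinate, move that coordinate to any other vertex of `G`; similarly for
the second. Otherwise pick `b ∈ H` different from `x.2` and `y.2`: if neither `(x.1, b)` nor
`(y.1, b)` distinguished `x` and `y`, adding the two equalities would give
`2 d_G(x.1, y.1) = 0`.
-/

namespace SimpleGraph

variable {α β : Type*} {G : SimpleGraph α} {H : SimpleGraph β}

lemma dist_boxProd {x y : α × β} (h₁ : G.Reachable x.1 y.1) (h₂ : H.Reachable x.2 y.2) :
    (G □ H).dist x y = G.dist x.1 y.1 + H.dist x.2 y.2 := by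
  have h : (G □ H).Reachable x y := reachable_boxProd.mpr ⟨h₁, h₂⟩
  have := h.coe_dist_eq_edist
  rw [edist_boxProd, ← h₁.coe_dist_eq_edist, ← h₂.coe_dist_eq_edist] at this
  exact_mod_cast this

end SimpleGraph

section DG

variable {V : Type*} [Fintype V] {G : SimpleGraph V} {x y : V}

lemma mem_DG_iff {z : V} : z ∈ DG G x y ↔ G.dist z x ≠ G.dist z y := by
  simp [DG]

lemma left_mem_DG (h : G.Reachable x y) (hne : x ≠ y) : x ∈ DG G x y := by
  rw [mem_DG_iff, dist_self]
  exact (h.pos_dist_of_ne hne).ne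

lemma right_mem_DG (h : G.Reachable x y) (hne : x ≠ y) : y ∈ DG G x y := by
  rw [mem_DG_iff, dist_self]
  exact (h.symm.pos_dist_of_ne hne.symm).ne'

lemma three_le_card_DG (h : G.Reachable x y) (hne : x ≠ y) {z : V} (hz : z ∈ DG G x y)
    (hzx : z ≠ x) (hzy : z ≠ y) : 3 ≤ (DG G x y).card :=
  Finset.two_lt_card.mpr
    ⟨x, left_mem_DG h hne, y, right_mem_DG h hne, z, hz, hne, hzx.symm, hzy.symm⟩

lemma le_frakd [Nontrivial V] {k : ℕ} (hk : ∀ x y : V, x ≠ y → k ≤ (DG G x y).card) :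
    k ≤ frakd G := by
  obtain ⟨x, y, hxy⟩ := exists_pair_ne V
  refine le_csInf ⟨_, x, y, hxy, rfl⟩ ?_
  rintro m ⟨u, v, huv, rfl⟩
  exact hk u v huv

end DG

section BoxProd

variable {V W : Type*} [Fintype V] [Fintype W] {G : SimpleGraph V} {H : SimpleGraph W}
  {x y : V × W}

lemma mem_DG_boxProd_iff (hG : G.Connected) (hH : H.Connected) {z : V × W} :
    z ∈ DG (G □ H) x y ↔
      G.dist z.1 x.1 + H.dist z.2 x.2 ≠ G.dist z.1 y.1 + H.dist z.2 y.2 := by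
  rw [mem_DG_iff, dist_boxProd (hG.preconnected _ _) (hH.preconnected _ _),
    dist_boxProd (hG.preconnected _ _) (hH.preconnected _ _)]

lemma exists_mem_DG_boxProd_of_fst_eq [Nontrivial V] (hG : G.Connected) (hH : H.Connected)
    (h₁ : x.1 = y.1) (h₂ : x.2 ≠ y.2) : ∃ z ∈ DG (G □ H) x y, z ≠ x ∧ z ≠ y := by
  obtain ⟨a, ha⟩ := exists_ne x.1
  refine ⟨(a, x.2), ?_, fun h => ha congr($h.1), fun h => ha (congr($h.1).trans h₁.symm)⟩
  rw [mem_DG_boxProd_iff hG hH]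
  dsimp only
  rw [← h₁, dist_self]
  have := hH.pos_dist_of_ne h₂
  omega

lemma exists_mem_DG_boxProd_of_snd_eq [Nontrivial W] (hG : G.Connected) (hH : H.Connected)
    (h₁ : x.1 ≠ y.1) (h₂ : x.2 = y.2) : ∃ z ∈ DG (G □ H) x y, z ≠ x ∧ z ≠ y := by
  obtain ⟨b, hb⟩ := exists_ne x.2
  refine ⟨(x.1, b), ?_, fun h => hb congr($h.2), fun h => hb (congr($h.2).trans h₂.symm)⟩
  rw [mem_DG_boxProd_iff hG hH]
  dsimp only
  rw [← h₂, dist_self]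
  have := hG.pos_dist_of_ne h₁
  omega

lemma exists_mem_DG_boxProd_of_fst_ne (hG : G.Connected) (hH : H.Connected)
    (hW : 3 ≤ Fintype.card W) (h₁ : x.1 ≠ y.1) :
    ∃ z ∈ DG (G □ H) x y, z ≠ x ∧ z ≠ y := by
  obtain ⟨b, hbx, hby⟩ := ENat.exists_ne_ne_of_three_le
    (by rw [ENat.card_eq_coe_fintype_card]; exact_mod_cast hW) x.2 y.2
  have hne : ∀ a, (a, b) ≠ x ∧ (a, b) ≠ y := fun a =>
    ⟨fun h => hbx congr($h.2), fun h => hby congr($h.2)⟩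
  by_cases hx : (x.1, b) ∈ DG (G □ H) x y
  · exact ⟨_, hx, hne x.1⟩
  refine ⟨(y.1, b), ?_, hne y.1⟩
  rw [mem_DG_boxProd_iff hG hH] at hx ⊢
  simp only [dist_self, not_not, dist_comm (u := y.1)] at hx ⊢
  have := hG.pos_dist_of_ne h₁
  omega

lemma three_le_card_DG_boxProd [Nontrivial V] (hG : G.Connected) (hH : H.Connected)
    (hW : 3 ≤ Fintype.card W) (hxy : x ≠ y) : 3 ≤ (DG (G □ H) x y).card := by
  have : Nontrivial W := Fintype.one_lt_card_iff_nontrivial.mp (by omega)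
  obtain ⟨z, hz, hzx, hzy⟩ : ∃ z ∈ DG (G □ H) x y, z ≠ x ∧ z ≠ y := by
    by_cases h₁ : x.1 = y.1
    · exact exists_mem_DG_boxProd_of_fst_eq hG hH h₁ fun h₂ => hxy (Prod.ext h₁ h₂)
    by_cases h₂ : x.2 = y.2
    · exact exists_mem_DG_boxProd_of_snd_eq hG hH h₁ h₂
    · exact exists_mem_DG_boxProd_of_fst_ne hG hH hW h₁
  exact three_le_card_DG ((hG.boxProd hH).preconnected x y) hxy hz hzx hzy

end BoxProd

theorem stmt_9_general {V W : Type*} [Fintype V] [Fintype W]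
    (G : SimpleGraph V) (H : SimpleGraph W)
    (hG : G.Connected) (hH : H.Connected)
    (hn : 2 ≤ Fintype.card V) (hn' : 3 ≤ Fintype.card W) :
    3 ≤ frakd (G □ H) := by
  have : Nontrivial V := Fintype.one_lt_card_iff_nontrivial.mp hn
  have : Nonempty W := hH.nonempty
  exact le_frakd fun _ _ => three_le_card_DG_boxProd hG hH hn'

theorem stmt_9 {V W : Type*} [Fintype V] [DecidableEq V] [Fintype W] [DecidableEq W]
    (G : SimpleGraph V) (H : SimpleGraph W)
    (hG : G.Connected) (hH : H.Connected)
    (hn : 2 ≤ Fintype.card V) (hn' : 3 ≤ Fintype.card W) :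
    3 ≤ frakd (G □ H) :=
  stmt_9_general G H hG hH hn hn'
end

section
/- If G is a connected graph of order n ≥ 2, then for any k with 1 ≤ k ≤ 𝔡(G) − 1, pd_k(G) ≤ dim_k(G) + 1. -/
open SimpleGraph Finset

/-! A minimum `k`-metric generator `W` yields the partition of `V` into the singletons of `W`
together with `V \ W`: it has at most `|W| + 1` parts, and the singleton `{w}` distinguishes
exactly the pairs that `w` distinguishes, so it is a `k`-partition generator. A `k`-metric
generator exists as soon as `k ≤ 𝔡(G)`, namely `V` itself. -/

lemma Finpartition.card_parts_extendOfLE_le {α : Type*} [GeneralizedBooleanAlgebra α]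
    [DecidableEq α] {a b : α} (P : Finpartition a) (hab : a ≤ b) :
    #(P.extendOfLE hab).parts ≤ #P.parts + 1 :=
  calc #(P.extendOfLE hab).parts
      ≤ #(insert (b \ a) P.parts) := card_le_card fun _ hp ↦ by
        rcases P.mem_parts_or_eq_sdiff_of_mem_extendOfLE hab hp with hp | rfl
        · exact mem_insert_of_mem hp
        · exact mem_insert_self _ _
    _ ≤ #P.parts + 1 := card_insert_le _ _

lemma setDist_singleton {V : Type*} [DecidableEq V] (G : SimpleGraph V) (u w : V) :
    setDist G u {w} = G.dist u w := by
  simp [setDist]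

section

variable {V : Type*} [Fintype V] (G : SimpleGraph V) {k : ℕ}

lemma frakd_le_card_DG {x y : V} (hxy : x ≠ y) : frakd G ≤ #(DG G x y) :=
  Nat.sInf_le ⟨x, y, hxy, rfl⟩

lemma isKMetricGenerator_univ (hk : k ≤ frakd G) : IsKMetricGenerator G k univ :=
  fun _ _ huv ↦ hk.trans (frakd_le_card_DG G huv)

lemma exists_isKMetricGenerator_card_eq_metricDim (h : ∃ W, IsKMetricGenerator G k W) :
    ∃ W, IsKMetricGenerator G k W ∧ #W = metricDim G k := by
  obtain ⟨W, hW⟩ := h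
  exact Nat.sInf_mem (s := {m | ∃ W : Finset V, IsKMetricGenerator G k W ∧ #W = m})
    ⟨#W, W, hW, rfl⟩

variable [DecidableEq V]

lemma pd_le_card_parts {P : Finpartition (univ : Finset V)} (hP : IsKPartitionGenerator G k P) :
    pd G k ≤ #P.parts :=
  Nat.sInf_le ⟨P, hP, rfl⟩

lemma IsKMetricGenerator.isKPartitionGenerator {W : Finset V} (hW : IsKMetricGenerator G k W)
    {P : Finpartition (univ : Finset V)} (hWP : ∀ w ∈ W, {w} ∈ P.parts) :
    IsKPartitionGenerator G k P := by
  intro u v huv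
  refine (hW u v huv).trans (card_le_card_of_injOn singleton (fun w hw ↦ ?_)
    singleton_injective.injOn)
  rw [mem_coe, mem_filter] at hw ⊢
  refine ⟨hWP w hw.1, ?_⟩
  rw [setDist_singleton, setDist_singleton, G.dist_comm, G.dist_comm (u := v)]
  exact hw.2

theorem pd_le_metricDim_add_one (h : ∃ W, IsKMetricGenerator G k W) :
    pd G k ≤ metricDim G k + 1 := by
  obtain ⟨W, hW, hWcard⟩ := exists_isKMetricGenerator_card_eq_metricDim G h
  let P : Finpartition (univ : Finset V) := (⊥ : Finpartition W).extendOfLE (subset_univ W)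
  have hWP : ∀ w ∈ W, {w} ∈ P.parts := fun w hw ↦
    Finpartition.parts_subset_extendOfLE _ _ (Finpartition.mem_bot_iff.2 ⟨w, hw, rfl⟩)
  calc pd G k ≤ #P.parts := pd_le_card_parts G (hW.isKPartitionGenerator G hWP)
    _ ≤ #W + 1 := by
      simpa only [Finpartition.card_bot] using
        (⊥ : Finpartition W).card_parts_extendOfLE_le (subset_univ W)
    _ = metricDim G k + 1 := by rw [hWcard]

end

theorem stmt_13_general {V : Type*} [Fintype V] [DecidableEq V] (G : SimpleGraph V)
    (k : ℕ) (hk' : k ≤ frakd G - 1) :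
    pd G k ≤ metricDim G k + 1 :=
  pd_le_metricDim_add_one G ⟨univ, isKMetricGenerator_univ G (hk'.trans (Nat.sub_le _ _))⟩

theorem stmt_13 {V : Type*} [Fintype V] [DecidableEq V] (G : SimpleGraph V)
    (hG : G.Connected) (hn : 2 ≤ Fintype.card V)
    (k : ℕ) (hk : 1 ≤ k) (hk' : k ≤ frakd G - 1) :
    pd G k ≤ metricDim G k + 1 :=
  stmt_13_general G k hk'
end
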